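/- For every integer N ≥ 4, every θ ∈ ℝ and every r with 0 ≤ r ≤ r_N*, one has K_N(θ, r) ≥ 0, where r_N* = (1 − 2 ln(2(N+1))/(N+1))^{1/2}. -/

import Mathlib

open Real

/-- The truncated Poisson kernel. -/
noncomputable def KN (N : ℕ) (ψ r : ℝ) : ℝ :=
  1 + 2 * ∑ n ∈ Finset.Icc 1 N, r^n * Real.cos (n*ψ)

theorem stmt9 (N : ℕ) (hN : 4 ≤ N) (θ r : ℝ) (hr0 : 0 ≤ r)
    (hr : r ≤ Real.sqrt (1 - 2*Real.log (2*(N+1))/(N+1))) :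
    0 ≤ KN N θ r := by
  set L : ℝ := Real.log (2*(N+1)) with hL
  by_cases hcase : 1 - 2*L/((N:ℝ)+1) < 0
  · -- degenerate case: sqrt of a negative is 0, so r = 0
    have hz : Real.sqrt (1 - 2*L/((N:ℝ)+1)) = 0 :=
      Real.sqrt_eq_zero_of_nonpos hcase.le
    have hr' : r = 0 := le_antisymm (by rwa [hz] at hr) hr0
    subst hr'
    have : ∑ n ∈ Finset.Icc 1 N, (0:ℝ)^n * Real.cos (n*θ) = 0 := by
      apply Finset.sum_eq_zero
      intro n hn
      have hn1 : 1 ≤ n := (Finset.mem_Icc.mp hn).1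
      rw [zero_pow (by omega), zero_mul]
    simp [KN, this]
  · push_neg at hcase
    have hNpos : (0:ℝ) < (N:ℝ)+1 := by positivity
    have h4 : (4:ℝ) ≤ (N:ℝ) := by exact_mod_cast hN
    have hpos2 : (0:ℝ) < 2*((N:ℝ)+1) := by positivity
    have hL1 : 1 ≤ L := by
      rw [hL, Real.le_log_iff_exp_le hpos2]
      have := Real.exp_one_lt_d9
      linarith
    have hr2 : r^2 ≤ 1 - 2*L/((N:ℝ)+1) := by
      have h1 : r^2 ≤ (Real.sqrt (1 - 2*L/((N:ℝ)+1)))^2 :=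
        pow_le_pow_left₀ hr0 hr 2
      rwa [Real.sq_sqrt hcase] at h1
    have hεpos : 0 < 2*L/((N:ℝ)+1) := by positivity
    have hr1 : r < 1 := by nlinarith
    -- bound on r^(N+1)
    have hpow : r^(N+1) ≤ 1/(2*((N:ℝ)+1)) := by
      have e1 : (r^2)^(N+1) ≤ (1 - 2*L/((N:ℝ)+1))^(N+1) :=
        pow_le_pow_left₀ (sq_nonneg r) hr2 (N+1)
      have e2 : (1 - 2*L/((N:ℝ)+1))^(N+1) ≤ (Real.exp (-(2*L/((N:ℝ)+1))))^(N+1) := by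
        apply pow_le_pow_left₀ hcase
        have := Real.add_one_le_exp (-(2*L/((N:ℝ)+1)))
        linarith
      have e3 : (Real.exp (-(2*L/((N:ℝ)+1))))^(N+1) = Real.exp (-(2*L)) := by
        rw [← Real.exp_nat_mul]
        congr 1
        field_simp
        push_cast
        ring
      have e4 : Real.exp (-(2*L)) = 1/(2*((N:ℝ)+1))^2 := by
        rw [Real.exp_neg, show (2:ℝ)*L = L + L by ring, Real.exp_add, hL,
          Real.exp_log hpos2]
        rw [one_div, sq]
      have hsq : (r^(N+1))^2 ≤ (1/(2*((N:ℝ)+1)))^2 := by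
        have : (r^(N+1))^2 = (r^2)^(N+1) := by
          rw [← pow_mul, ← pow_mul, mul_comm]
        rw [this, div_pow, one_pow]
        calc (r^2)^(N+1) ≤ (1 - 2*L/((N:ℝ)+1))^(N+1) := e1
          _ ≤ (Real.exp (-(2*L/((N:ℝ)+1))))^(N+1) := e2
          _ = Real.exp (-(2*L)) := e3
          _ = 1/(2*((N:ℝ)+1))^2 := e4
      have h5 := Real.sqrt_le_sqrt hsq
      rwa [Real.sqrt_sq (pow_nonneg hr0 (N+1)), Real.sqrt_sq (by positivity)] at h5
    -- key inequality
    have hkey : 0 ≤ 1 - r^2 - 4*r^(N+1) := by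
      have h2L : 2/((N:ℝ)+1) ≤ 2*L/((N:ℝ)+1) := by
        rw [div_le_div_iff₀ hNpos hNpos]; nlinarith
      have h4r : 4*(1/(2*((N:ℝ)+1))) = 2/((N:ℝ)+1) := by
        field_simp; ring
      nlinarith [hpow]
    -- positivity of the denominator
    have hD : 0 < 1 - 2*r*Real.cos θ + r^2 := by
      nlinarith [Real.cos_le_one θ, Real.neg_one_le_cos θ, sq_nonneg (1-r)]
    -- telescoping identity
    have hsum : (∑ k ∈ Finset.range N, r^(k+1) * Real.cos (((k:ℝ)+1)*θ)) *
        (1 - 2*r*Real.cos θ + r^2)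
        = (r * Real.cos θ - r^2) -
          (r^(N+1) * Real.cos (((N:ℝ)+1)*θ) - r^(N+2) * Real.cos ((N:ℝ)*θ)) := by
      set h : ℕ → ℝ := fun k =>
        r^(k+1) * Real.cos (((k:ℝ)+1)*θ) - r^(k+2) * Real.cos ((k:ℝ)*θ) with hh
      have tele : ∑ k ∈ Finset.range N, (h k - h (k+1)) = h 0 - h N :=
        Finset.sum_range_sub' h N
      have step : ∀ k : ℕ, r^(k+1) * Real.cos (((k:ℝ)+1)*θ) *
          (1 - 2*r*Real.cos θ + r^2) = h k - h (k+1) := by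
        intro k
        simp only [hh]
        push_cast
        have c1 : Real.cos (((k:ℝ)+1+1)*θ)
            = Real.cos (((k:ℝ)+1)*θ)*Real.cos θ - Real.sin (((k:ℝ)+1)*θ)*Real.sin θ := by
          rw [show ((k:ℝ)+1+1)*θ = ((k:ℝ)+1)*θ + θ by ring, Real.cos_add]
        have c2 : Real.cos ((k:ℝ)*θ)
            = Real.cos (((k:ℝ)+1)*θ)*Real.cos θ + Real.sin (((k:ℝ)+1)*θ)*Real.sin θ := by
          rw [show (k:ℝ)*θ = ((k:ℝ)+1)*θ - θ by ring, Real.cos_sub]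
        rw [c1, c2]
        ring
      rw [Finset.sum_mul]
      rw [Finset.sum_congr rfl (fun k _ => step k), tele]
      simp only [hh]
      push_cast
      norm_num
    -- turn the Icc sum into a range sum
    have hIcc : ∑ n ∈ Finset.Icc 1 N, r^n * Real.cos (n*θ)
        = ∑ k ∈ Finset.range N, r^(k+1) * Real.cos (((k:ℝ)+1)*θ) := by
      rw [← Finset.Ico_add_one_right_eq_Icc, Finset.sum_Ico_eq_sum_range]
      apply Finset.sum_congr (by norm_num)
      intro k _
      push_cast
      ring_nf
    have hId : KN N θ r * (1 - 2*r*Real.cos θ + r^2)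
        = 1 - r^2 - 2*(r^(N+1) * Real.cos (((N:ℝ)+1)*θ) - r^(N+2) * Real.cos ((N:ℝ)*θ)) := by
      unfold KN
      rw [hIcc]
      linear_combination 2 * hsum
    have b1 : r^(N+1) * Real.cos (((N:ℝ)+1)*θ) ≤ r^(N+1) := by
      nlinarith [Real.cos_le_one (((N:ℝ)+1)*θ), pow_nonneg hr0 (N+1)]
    have b2 : -(r^(N+2)) ≤ r^(N+2) * Real.cos ((N:ℝ)*θ) := by
      nlinarith [Real.neg_one_le_cos ((N:ℝ)*θ), pow_nonneg hr0 (N+2)]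
    have b3 : r^(N+2) ≤ r^(N+1) := pow_le_pow_of_le_one hr0 hr1.le (by omega)
    have hprod : 0 ≤ KN N θ r * (1 - 2*r*Real.cos θ + r^2) := by
      rw [hId]
      linarith
    exact (mul_nonneg_iff_of_pos_right hD).mp hprod
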